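/- For every integer n ≥ 1, χ_la(C_{2n+1} ∨ O_{2n}) = 4. -/

import Mathlib

open Finset SimpleGraph
open scoped Classical

/-- The induced vertex label (weight) of `x`: the sum of `f` over all edges incident to `x`. -/
noncomputable def vertexWeight {V : Type*} [Fintype V] (G : SimpleGraph V)
    (f : Sym2 V → ℕ) (x : V) : ℕ :=
  ∑ e ∈ G.edgeFinset.filter (fun e => x ∈ e), f e

/-- `f` is a local antimagic labeling of `G`: it restricts to a bijection from the edge set of
`G` onto `{1, …, q}` (where `q` is the number of edges), and adjacent vertices get distinct
induced vertex labels. -/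
def IsLocalAntimagic {V : Type*} [Fintype V] (G : SimpleGraph V) (f : Sym2 V → ℕ) : Prop :=
  Set.BijOn f G.edgeSet (Set.Icc 1 G.edgeSet.ncard) ∧
  ∀ ⦃x y : V⦄, G.Adj x y → vertexWeight G f x ≠ vertexWeight G f y

/-- The number of distinct induced vertex labels, `c(f)`. -/
noncomputable def colorCount {V : Type*} [Fintype V] (G : SimpleGraph V)
    (f : Sym2 V → ℕ) : ℕ :=
  (Finset.univ.image (vertexWeight G f)).card

/-- The local antimagic chromatic number `χ_la(G)`. -/
noncomputable def chiLA {V : Type*} [Fintype V] (G : SimpleGraph V) : ℕ :=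
  sInf { n | ∃ f : Sym2 V → ℕ, IsLocalAntimagic G f ∧ colorCount G f = n }

/-- The join `G ∨ H` of two vertex-disjoint graphs. -/
def joinG {α β : Type*} (G : SimpleGraph α) (H : SimpleGraph β) : SimpleGraph (α ⊕ β) :=
  SimpleGraph.fromRel (fun x y =>
    (∃ a b, x = Sum.inl a ∧ y = Sum.inl b ∧ G.Adj a b) ∨
    (∃ a b, x = Sum.inr a ∧ y = Sum.inr b ∧ H.Adj a b) ∨
    (∃ a b, x = Sum.inl a ∧ y = Sum.inr b))

/-!
Lower bound: the vertex weights of a local antimagic labeling form a proper colouring, and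
`C_{2n+1} ∨ O_{2n}` is not 3-colourable, since the odd cycle already needs three colours and every
vertex of `O_{2n}` is adjacent to the whole cycle.

Upper bound: put `m = 2n+1` and identify the labels `1, …, m²` with the cells `(x, y)` of
`ℤ/m × ℤ/m` through `m x + y + 1`. The cycle edge `u_i u_{i+1}` gets a diagonal cell `(d_i, d_i)`
and the edge `u_i v_j` the off-diagonal cell `(r_i + c, r_i + 2c)` with `c = j + 1 ≠ 0`. For fixed
`c` both coordinates run through all of `ℤ/m`, and for fixed `r_i` (since `2` is invertible) both
run through `ℤ/m ∖ {r_i}`. With `T = 0 + 1 + ⋯ + (m-1)`, every `v_j` therefore has weight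
`(m+1)T + m` and `u_i` has weight `(m+1)(T + d_{i-1} + d_i - r_i + 1)`. The `d_i` are ordered so
that the sums `d_{i-1} + d_i` are `n, n+1, …, 3n`, and the permutation `r` is chosen so that
`d_{i-1} + d_i - r_i` is `n` at `i = 0` and then alternates between `n - 1` and `n + 1`.
-/

theorem bijOn_extend_range_Icc {ι α : Type*} [Fintype ι] {e : ι → α} (he : Function.Injective e)
    {g : ι → ℕ} (hg : Function.Injective g) (hmaps : ∀ k, g k ∈ Set.Icc 1 (Fintype.card ι)) :
    Set.BijOn (Function.extend e g 0) (Set.range e) (Set.Icc 1 (Set.range e).ncard) := by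
  rw [Set.ncard_range_of_injective he, Nat.card_eq_fintype_card, ← Set.image_univ,
    ← Set.bijOn_comp_iff he.injOn, Function.extend_comp he]
  have himage : g '' Set.univ = Set.Icc 1 (Fintype.card ι) := by
    refine Set.eq_of_subset_of_ncard_le (Set.image_subset_iff.2 fun k _ => hmaps k) ?_
      (Set.finite_Icc _ _)
    simp [Set.ncard_range_of_injective hg]
  exact ⟨fun k _ => hmaps k, hg.injOn, himage.symm.subset⟩

theorem ZMod.sum_eq_add_sum_natCast_succ {M : Type*} [AddCommMonoid M] (k : ℕ)
    (F : ZMod (k + 1) → M) : ∑ c, F c = F 0 + ∑ j : Fin k, F ((j + 1 : ℕ) : ZMod (k + 1)) := by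
  rw [← (ZMod.finEquiv (k + 1)).toEquiv.sum_comp, Fin.sum_univ_succ]
  refine congrArg₂ _ (by simp) (Fintype.sum_congr _ _ fun j => congrArg F ?_)
  exact ZMod.val_injective _ (by rw [ZMod.val_natCast_of_lt (by omega)]; rfl)

section LocalAntimagic

variable {V : Type*} [Fintype V]

theorem vertexWeight_eq_sum_adj (G : SimpleGraph V) (f : Sym2 V → ℕ) (x : V) :
    vertexWeight G f x = ∑ y, if G.Adj x y then f s(x, y) else 0 := by
  rw [← Finset.sum_filter, vertexWeight, ← incidenceFinset_eq_filter]
  have hincidence : G.incidenceFinset x = (univ.filter (G.Adj x)).image (fun y => s(x, y)) := by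
    ext e
    induction e using Sym2.ind with
    | _ a b =>
      simp only [mem_incidenceFinset, incidenceSet, Set.mem_ofPred_eq, mem_edgeSet, Sym2.mem_iff,
        mem_image, mem_filter, mem_univ, true_and, Sym2.eq_iff]
      constructor
      · rintro ⟨hab, rfl | rfl⟩
        · exact ⟨b, hab, .inl ⟨rfl, rfl⟩⟩
        · exact ⟨a, hab.symm, .inr ⟨rfl, rfl⟩⟩
      · rintro ⟨c, hc, ⟨rfl, rfl⟩ | ⟨rfl, rfl⟩⟩
        · exact ⟨hc, .inl rfl⟩
        · exact ⟨hc.symm, .inr rfl⟩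
  rw [hincidence, Finset.sum_image fun y _ z _ h => Sym2.congr_right.1 h]

theorem IsLocalAntimagic.colorable {G : SimpleGraph V} {f : Sym2 V → ℕ}
    (hf : IsLocalAntimagic G f) : G.Colorable (colorCount G f) := by
  simpa [colorCount] using
    (Coloring.mk (fun v => (⟨vertexWeight G f v, mem_image_of_mem _ (mem_univ v)⟩ :
      univ.image (vertexWeight G f))) fun hadj h => hf.2 hadj (congrArg Subtype.val h)).colorable

theorem chiLA_le_colorCount {G : SimpleGraph V} {f : Sym2 V → ℕ} (hf : IsLocalAntimagic G f) :
    chiLA G ≤ colorCount G f :=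
  Nat.sInf_le ⟨f, hf, rfl⟩

theorem lt_chiLA_of_not_colorable {G : SimpleGraph V} {f : Sym2 V → ℕ}
    (hf : IsLocalAntimagic G f) {k : ℕ} (hk : ¬ G.Colorable k) : k < chiLA G := by
  refine le_csInf ⟨colorCount G f, ?_⟩ ?_
  · exact ⟨f, hf, rfl⟩
  rintro _ ⟨g, hg, rfl⟩
  by_contra! h
  exact hk (hg.colorable.mono (Nat.le_of_lt_succ h))

end LocalAntimagic

section Join

variable {α β : Type*} (G : SimpleGraph α) (H : SimpleGraph β)

@[simp] theorem joinG_adj_inl_inl {a b : α} : (joinG G H).Adj (.inl a) (.inl b) ↔ G.Adj a b := by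
  simp [joinG, G.adj_comm b a, and_iff_right_of_imp G.ne_of_adj]

@[simp] theorem joinG_adj_inl_inr {a : α} {b : β} : (joinG G H).Adj (.inl a) (.inr b) := by
  simp [joinG]

@[simp] theorem joinG_adj_inr_inl {a : α} {b : β} : (joinG G H).Adj (.inr b) (.inl a) := by
  simp [joinG]

@[simp] theorem joinG_adj_inr_inr {a b : β} : (joinG G H).Adj (.inr a) (.inr b) ↔ H.Adj a b := by
  simp [joinG, H.adj_comm b a, and_iff_right_of_imp H.ne_of_adj]

variable {G H}

theorem SimpleGraph.Colorable.of_joinG_succ [Nonempty β] {k : ℕ}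
    (h : (joinG G H).Colorable (k + 1)) : G.Colorable k := by
  obtain ⟨C⟩ := h
  obtain ⟨b⟩ := ‹Nonempty β›
  let C' : G.Coloring {c // c ≠ C (.inr b)} :=
    Coloring.mk (fun a => ⟨C (.inl a), C.valid (joinG_adj_inl_inr G H)⟩)
      fun hadj h => C.valid ((joinG_adj_inl_inl G H).2 hadj) (congrArg Subtype.val h)
  simpa using C'.colorable

end Join

section OddCycle

variable {n : ℕ}

theorem cycleGraph_adj_iff_of_one_le (hn : 1 ≤ n) {a b : Fin (2 * n + 1)} :
    (cycleGraph (2 * n + 1)).Adj a b ↔ b = a - 1 ∨ b = a + 1 := by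
  obtain ⟨k, rfl⟩ := Nat.exists_eq_add_of_le' hn
  exact Set.ext_iff.1 (cycleGraph_neighborSet (n := 2 * k + 1) (v := a)) b

theorem Fin.sub_one_ne_add_one (hn : 1 ≤ n) (a : Fin (2 * n + 1)) : a - 1 ≠ a + 1 := by
  obtain ⟨k, rfl⟩ := Nat.exists_eq_add_of_le' hn
  simp only [ne_eq, sub_eq_iff_eq_add, add_assoc a, left_eq_add]
  exact ne_of_beq_false rfl

end OddCycle

abbrev oddCycleJoin (n : ℕ) : SimpleGraph (Fin (2 * n + 1) ⊕ Fin (2 * n)) :=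
  joinG (cycleGraph (2 * n + 1)) ⊥

namespace oddCycleJoin

section Indices

def diagIndex (n i : ℕ) : ℕ := if i % 2 = 0 then i / 2 else n + 1 + i / 2

def rowIndex (i : ℕ) : ℕ := if i = 0 then 0 else if i % 2 = 1 then i + 1 else i - 1

def level (n i : ℕ) : ℕ := if i = 0 then n else if i % 2 = 1 then n - 1 else n + 1

variable {n i j : ℕ}

theorem diagIndex_lt (hi : i < 2 * n + 1) : diagIndex n i < 2 * n + 1 := by
  unfold diagIndex; split <;> omega

theorem diagIndex_inj (hi : i < 2 * n + 1) (hj : j < 2 * n + 1)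
    (h : diagIndex n i = diagIndex n j) : i = j := by
  unfold diagIndex at h; split_ifs at h <;> omega

theorem rowIndex_lt (hi : i < 2 * n + 1) : rowIndex i < 2 * n + 1 := by
  unfold rowIndex; split_ifs <;> omega

theorem rowIndex_injective : Function.Injective rowIndex := by
  intro i j h
  unfold rowIndex at h; split_ifs at h <;> omega

theorem level_mem (n i : ℕ) : level n i ∈ ({n - 1, n, n + 1} : Finset ℕ) := by
  unfold level; split_ifs <;> simp

theorem diagIndex_sub_one_add_diagIndex (hn : 1 ≤ n) (i : Fin (2 * n + 1)) :
    diagIndex n (i - 1 : Fin (2 * n + 1)) + diagIndex n i = rowIndex i + level n i := by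
  have hi := i.isLt
  rw [Fin.coe_sub_one]
  simp only [Fin.ext_iff, Fin.val_zero]
  unfold diagIndex rowIndex level
  split_ifs <;> omega

theorem level_add_one_ne (hn : 1 ≤ n) (i : Fin (2 * n + 1)) :
    level n (i + 1 : Fin (2 * n + 1)) ≠ level n i := by
  have hi := i.isLt
  rw [Fin.val_add_one]
  simp only [Fin.ext_iff, Fin.val_last]
  split_ifs <;> unfold level <;> split_ifs <;> first | contradiction | omega

end Indices

section Cells

variable (n : ℕ)

def cellLabel (x y : ZMod (2 * n + 1)) : ℕ := (2 * n + 1) * x.val + y.val + 1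

def valSum : ℕ := ∑ x : ZMod (2 * n + 1), x.val

def twoUnit : (ZMod (2 * n + 1))ˣ :=
  ZMod.unitOfCoprime 2 (Nat.coprime_two_left.2 (odd_two_mul_add_one n))

variable {n}

theorem cellLabel_inj {x y x' y' : ZMod (2 * n + 1)} (h : cellLabel n x y = cellLabel n x' y') :
    x = x' ∧ y = y' := by
  have decode (x y : ZMod (2 * n + 1)) :
      ((2 * n + 1) * x.val + y.val) / (2 * n + 1) = x.val ∧
        ((2 * n + 1) * x.val + y.val) % (2 * n + 1) = y.val :=
    (Nat.div_mod_unique (by omega)).2 ⟨by ring, ZMod.val_lt y⟩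
  have h' : (2 * n + 1) * x.val + y.val = (2 * n + 1) * x'.val + y'.val := by
    unfold cellLabel at h; omega
  obtain ⟨hx, hy⟩ := decode x y
  obtain ⟨hx', hy'⟩ := decode x' y'
  rw [h'] at hx hy
  exact ⟨ZMod.val_injective _ (hx.symm.trans hx'), ZMod.val_injective _ (hy.symm.trans hy')⟩

theorem cellLabel_mem_Icc (x y : ZMod (2 * n + 1)) :
    cellLabel n x y ∈ Set.Icc 1 ((2 * n + 1) ^ 2) := by
  have hx : x.val ≤ 2 * n := Nat.le_of_lt_succ (ZMod.val_lt x)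
  have hy : y.val ≤ 2 * n := Nat.le_of_lt_succ (ZMod.val_lt y)
  refine ⟨by unfold cellLabel; omega, ?_⟩
  calc cellLabel n x y ≤ (2 * n + 1) * (2 * n) + 2 * n + 1 := by unfold cellLabel; gcongr
    _ = (2 * n + 1) ^ 2 := by ring

theorem cellLabel_self (x : ZMod (2 * n + 1)) : cellLabel n x x = (2 * n + 2) * x.val + 1 := by
  unfold cellLabel; ring

theorem sum_cellLabel_perm (φ ψ : Equiv.Perm (ZMod (2 * n + 1))) :
    ∑ x, cellLabel n (φ x) (ψ x) = (2 * n + 2) * valSum n + (2 * n + 1) := by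
  simp only [cellLabel, Finset.sum_add_distrib, ← Finset.mul_sum, Equiv.sum_comp φ (fun x => x.val),
    Equiv.sum_comp ψ (fun x => x.val), Finset.sum_const, Finset.card_univ, ZMod.card, smul_eq_mul,
    mul_one, valSum]
  ring

theorem sum_cellLabel_row (a : ZMod (2 * n + 1)) :
    ∑ c, cellLabel n (a + c) (a + 2 * c) = (2 * n + 2) * valSum n + (2 * n + 1) := by
  simpa [twoUnit] using
    sum_cellLabel_perm (Equiv.addLeft a) ((Units.mulLeft (twoUnit n)).trans (Equiv.addLeft a))

theorem sum_cellLabel_column (c : ZMod (2 * n + 1)) :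
    ∑ x, cellLabel n (x + c) (x + 2 * c) = (2 * n + 2) * valSum n + (2 * n + 1) :=
  sum_cellLabel_perm (Equiv.addRight c) (Equiv.addRight (2 * c))

end Cells

variable {n : ℕ}

def diagCell (i : Fin (2 * n + 1)) : ZMod (2 * n + 1) := (diagIndex n i : ℕ)

def rowCell (i : Fin (2 * n + 1)) : ZMod (2 * n + 1) := (rowIndex i : ℕ)

def colShift (j : Fin (2 * n)) : ZMod (2 * n + 1) := (j + 1 : ℕ)

theorem val_diagCell (i : Fin (2 * n + 1)) : (diagCell i).val = diagIndex n i :=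
  ZMod.val_natCast_of_lt (diagIndex_lt i.isLt)

theorem val_rowCell (i : Fin (2 * n + 1)) : (rowCell i).val = rowIndex i :=
  ZMod.val_natCast_of_lt (rowIndex_lt i.isLt)

theorem diagCell_injective : Function.Injective (diagCell (n := n)) := fun i j h =>
  Fin.ext (diagIndex_inj i.isLt j.isLt (by rw [← val_diagCell, ← val_diagCell, h]))

theorem rowCell_bijective : Function.Bijective (rowCell (n := n)) := by
  refine (Fintype.bijective_iff_injective_and_card _).2 ⟨fun i j h => ?_, by simp⟩
  exact Fin.ext (rowIndex_injective (by rw [← val_rowCell, ← val_rowCell, h]))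

theorem val_colShift (j : Fin (2 * n)) : (colShift j).val = j + 1 :=
  ZMod.val_natCast_of_lt (by omega)

theorem colShift_ne_zero (j : Fin (2 * n)) : colShift j ≠ 0 := by
  intro h
  simpa [h] using val_colShift j

theorem colShift_injective : Function.Injective (colShift (n := n)) := fun i j h =>
  Fin.ext (by simpa [val_colShift] using congrArg ZMod.val h)

abbrev EdgeIndex (n : ℕ) : Type := Fin (2 * n + 1) ⊕ Fin (2 * n + 1) × Fin (2 * n)

def edgeOf : EdgeIndex n → Sym2 (Fin (2 * n + 1) ⊕ Fin (2 * n))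
  | .inl i => s(.inl i, .inl (i + 1))
  | .inr (i, j) => s(.inl i, .inr j)

def edgeLabel : EdgeIndex n → ℕ
  | .inl i => cellLabel n (diagCell i) (diagCell i)
  | .inr (i, j) => cellLabel n (rowCell i + colShift j) (rowCell i + 2 * colShift j)

variable (n) in
noncomputable def labeling : Sym2 (Fin (2 * n + 1) ⊕ Fin (2 * n)) → ℕ :=
  Function.extend edgeOf edgeLabel 0

theorem edgeOf_injective (hn : 1 ≤ n) : Function.Injective (edgeOf (n := n)) := by
  rintro (i | ⟨i, j⟩) (i' | ⟨i', j'⟩) h <;> simp only [edgeOf, Sym2.eq_iff] at h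
  · simp only [Sum.inl.injEq] at h
    rcases h with ⟨rfl, -⟩ | ⟨rfl, h⟩
    · rfl
    · exact absurd (by rw [add_sub_cancel_right]; exact h.symm) (Fin.sub_one_ne_add_one hn (i' + 1))
  · simp at h
  · simp at h
  · simp only [Sum.inl.injEq, Sum.inr.injEq, reduceCtorEq, and_false, or_false] at h
    rw [h.1, h.2]

theorem range_edgeOf (hn : 1 ≤ n) : Set.range (edgeOf (n := n)) = (oddCycleJoin n).edgeSet := by
  ext e
  constructor
  · rintro ⟨i | ⟨i, j⟩, rfl⟩ <;> simp [edgeOf, cycleGraph_adj_iff_of_one_le hn]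
  induction e using Sym2.ind with
  | _ x y =>
    rw [mem_edgeSet]
    rcases x with a | b <;> rcases y with a' | b' <;> intro h
    · rcases (joinG_adj_inl_inl _ _).1 h |> (cycleGraph_adj_iff_of_one_le hn).1 with rfl | rfl
      · exact ⟨.inl (a - 1), by simp [edgeOf, Sym2.eq_swap]⟩
      · exact ⟨.inl a, rfl⟩
    · exact ⟨.inr (a, b'), rfl⟩
    · exact ⟨.inr (a', b), Sym2.eq_swap⟩
    · simp at h

theorem edgeLabel_injective : Function.Injective (edgeLabel (n := n)) := by
  rintro (i | ⟨i, j⟩) (i' | ⟨i', j'⟩) h <;> obtain ⟨h₁, h₂⟩ := cellLabel_inj h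
  · rw [diagCell_injective h₁]
  · exact absurd (by linear_combination h₁ - h₂) (colShift_ne_zero j')
  · exact absurd (by linear_combination h₂ - h₁) (colShift_ne_zero j)
  · have hj : colShift j = colShift j' := by linear_combination h₂ - h₁
    have hi : rowCell i = rowCell i' := by linear_combination 2 * h₁ - h₂
    rw [rowCell_bijective.1 hi, colShift_injective hj]

theorem edgeLabel_mem_Icc (k : EdgeIndex n) :
    edgeLabel k ∈ Set.Icc 1 (Fintype.card (EdgeIndex n)) := by
  have hcard : Fintype.card (EdgeIndex n) = (2 * n + 1) ^ 2 := by
    simp only [Fintype.card_sum, Fintype.card_fin, Fintype.card_prod]; ring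
  rw [hcard]
  rcases k with i | ⟨i, j⟩ <;> exact cellLabel_mem_Icc _ _

theorem bijOn_labeling (hn : 1 ≤ n) :
    Set.BijOn (labeling n) (oddCycleJoin n).edgeSet
      (Set.Icc 1 (oddCycleJoin n).edgeSet.ncard) := by
  rw [← range_edgeOf hn]
  exact bijOn_extend_range_Icc (edgeOf_injective hn) edgeLabel_injective edgeLabel_mem_Icc

theorem labeling_edgeOf (hn : 1 ≤ n) (k : EdgeIndex n) : labeling n (edgeOf k) = edgeLabel k :=
  (edgeOf_injective hn).extend_apply _ _ k

theorem vertexWeight_inr (hn : 1 ≤ n) (j : Fin (2 * n)) :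
    vertexWeight (oddCycleJoin n) (labeling n) (.inr j) = (2 * n + 2) * valSum n + (2 * n + 1) := by
  rw [vertexWeight_eq_sum_adj, Fintype.sum_sum_type]
  simp only [joinG_adj_inr_inl, joinG_adj_inr_inr, bot_adj, if_true, if_false,
    Finset.sum_const_zero, add_zero]
  calc ∑ i, labeling n s(.inr j, .inl i)
      = ∑ i, cellLabel n (rowCell i + colShift j) (rowCell i + 2 * colShift j) := by
        refine Fintype.sum_congr _ _ fun i => ?_
        rw [Sym2.eq_swap]
        exact labeling_edgeOf hn (.inr (i, j))
    _ = _ := by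
        rw [rowCell_bijective.sum_comp fun x => cellLabel n (x + colShift j) (x + 2 * colShift j)]
        exact sum_cellLabel_column _

theorem vertexWeight_inl (hn : 1 ≤ n) (i : Fin (2 * n + 1)) :
    vertexWeight (oddCycleJoin n) (labeling n) (.inl i) =
      (2 * n + 2) * (valSum n + level n i + 1) := by
  rw [vertexWeight_eq_sum_adj, Fintype.sum_sum_type]
  simp only [joinG_adj_inl_inl, joinG_adj_inl_inr, if_true]
  rw [Fintype.sum_eq_add (i - 1) (i + 1) (Fin.sub_one_ne_add_one hn i) fun a ha => if_neg (by
    rw [cycleGraph_adj_iff_of_one_le hn]; tauto)]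
  simp only [cycleGraph_adj_iff_of_one_le hn, true_or, or_true, if_true]
  have hprev : labeling n s(.inl i, .inl (i - 1)) = edgeLabel (.inl (i - 1)) := by
    rw [← labeling_edgeOf hn]
    simp [edgeOf, Sym2.eq_swap]
  have hnext : labeling n s(.inl i, .inl (i + 1)) = edgeLabel (.inl i) :=
    labeling_edgeOf hn (.inl i)
  have hbip (j) : labeling n s(.inl i, .inr j) = edgeLabel (.inr (i, j)) :=
    labeling_edgeOf hn (.inr (i, j))
  simp only [hprev, hnext, hbip, edgeLabel, cellLabel_self, val_diagCell]
  have hrow := sum_cellLabel_row (rowCell i)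
  rw [ZMod.sum_eq_add_sum_natCast_succ, mul_zero, add_zero, cellLabel_self, val_rowCell] at hrow
  change _ + ∑ j, cellLabel n (rowCell i + colShift j) (rowCell i + 2 * colShift j) = _ at hrow
  have hdiag := congrArg ((2 * n + 2) * ·) (diagIndex_sub_one_add_diagIndex hn i)
  linarith

theorem vertexWeight_labeling_ne_of_adj (hn : 1 ≤ n) ⦃x y : Fin (2 * n + 1) ⊕ Fin (2 * n)⦄
    (hxy : (oddCycleJoin n).Adj x y) :
    vertexWeight (oddCycleJoin n) (labeling n) x ≠
      vertexWeight (oddCycleJoin n) (labeling n) y := by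
  have hlt (i : Fin (2 * n + 1)) (j : Fin (2 * n)) :
      vertexWeight (oddCycleJoin n) (labeling n) (.inr j) <
        vertexWeight (oddCycleJoin n) (labeling n) (.inl i) := by
    rw [vertexWeight_inl hn, vertexWeight_inr hn]
    nlinarith
  rcases x with a | b <;> rcases y with a' | b'
  · rw [vertexWeight_inl hn, vertexWeight_inl hn, ne_eq, Nat.mul_left_cancel_iff (by omega)]
    rcases (joinG_adj_inl_inl _ _).1 hxy |> (cycleGraph_adj_iff_of_one_le hn).1 with rfl | rfl
    · have := level_add_one_ne hn (a - 1)
      rw [sub_add_cancel] at this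
      omega
    · have := level_add_one_ne hn a
      omega
  · exact (hlt a b').ne'
  · exact (hlt a' b).ne
  · simp at hxy

theorem isLocalAntimagic_labeling (hn : 1 ≤ n) : IsLocalAntimagic (oddCycleJoin n) (labeling n) :=
  ⟨bijOn_labeling hn, vertexWeight_labeling_ne_of_adj hn⟩

theorem colorCount_labeling_le (hn : 1 ≤ n) : colorCount (oddCycleJoin n) (labeling n) ≤ 4 := by
  let w (s : ℕ) := (2 * n + 2) * (valSum n + s + 1)
  calc colorCount (oddCycleJoin n) (labeling n)
      ≤ #{w (n - 1), w n, w (n + 1), (2 * n + 2) * valSum n + (2 * n + 1)} := by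
        refine card_le_card fun _ hx => ?_
        obtain ⟨x | x, -, rfl⟩ := mem_image.1 hx
        · rw [vertexWeight_inl hn]
          have := level_mem n x
          simp only [mem_insert, mem_singleton] at this ⊢
          rcases this with h | h | h <;> simp [w, h]
        · simp [vertexWeight_inr hn]
    _ ≤ 4 := card_le_four

theorem not_colorable_three (hn : 1 ≤ n) : ¬ (oddCycleJoin n).Colorable 3 := by
  intro h
  have : Nonempty (Fin (2 * n)) := ⟨⟨0, by omega⟩⟩
  have hcycle : (cycleGraph (2 * n + 1)).Colorable 2 := h.of_joinG_succ
  rw [← chromaticNumber_le_iff_colorable,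
    chromaticNumber_cycleGraph_of_odd _ (by omega) (odd_two_mul_add_one n)] at hcycle
  norm_num at hcycle

end oddCycleJoin

/-- Theorem: For every integer `n ≥ 1`, `χ_la(C_{2n+1} ∨ O_{2n}) = 4`. -/
theorem chiLA_oddCycle_join_null_even (n : ℕ) (hn : 1 ≤ n) :
    chiLA (joinG (cycleGraph (2 * n + 1)) (⊥ : SimpleGraph (Fin (2 * n)))) = 4 := by
  have hf := oddCycleJoin.isLocalAntimagic_labeling hn
  exact le_antisymm ((chiLA_le_colorCount hf).trans (oddCycleJoin.colorCount_labeling_le hn))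
    (lt_chiLA_of_not_colorable hf (oddCycleJoin.not_colorable_three hn))
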